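/- Fix n > 0. Define, for t > 0, V_out(t) = γ(n/2, t)·γ((n+2)/2, t)/γ((n+1)/2, t)² − 1 and V_in(t) = Γ(n/2, t)·Γ((n+2)/2, t)/Γ((n+1)/2, t)² − 1, where γ and Γ are the lower and upper incomplete gamma functions. Then lim_{t → 0⁺} V_out(t) = 1/(n·(n+2)) and lim_{t → ∞} V_in(t) = 0. Consequently, an outer-truncated scaled chi distribution on [0, a] with fixed mean M has variance tending to M²/(n(n+2)) as a/σ → 0, and an inner-truncated scaled chi distribution on [a, ∞) with fixed mean M has variance tending to 0 as a/σ → ∞. -/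

import Mathlib

open MeasureTheory Real Filter Set

/-- The upper incomplete gamma function `Γ(s, x) = ∫ₓ^∞ u^{s−1} e^{−u} du`. -/
noncomputable def uGamma (s x : ℝ) : ℝ :=
  ∫ u in Set.Ioi x, u ^ (s - 1) * Real.exp (-u)

/-- The lower incomplete gamma function `γ(s, x) = ∫₀ˣ u^{s−1} e^{−u} du`. -/
noncomputable def lGamma (s x : ℝ) : ℝ :=
  ∫ u in Set.Ioc (0 : ℝ) x, u ^ (s - 1) * Real.exp (-u)

/-- Normalized variance of the outer-truncated scaled chi distribution with `n` degrees of
freedom, as a function of `t = a²/(2σ²)`: the variance equals `M²·V_out(t)` when the mean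
is `M`. -/
noncomputable def Vout (n t : ℝ) : ℝ :=
  lGamma (n / 2) t * lGamma ((n + 2) / 2) t / lGamma ((n + 1) / 2) t ^ 2 - 1

/-- Normalized variance of the inner-truncated scaled chi distribution with `n` degrees of
freedom, as a function of `t = a²/(2σ²)`: the variance equals `M²·V_in(t)` when the mean
is `M`. -/
noncomputable def Vin (n t : ℝ) : ℝ :=
  uGamma (n / 2) t * uGamma ((n + 2) / 2) t / uGamma ((n + 1) / 2) t ^ 2 - 1

/-!
As `t → 0⁺` the factor `e^{-u}` in `γ(s, t)` lies between `e^{-t}` and `1`, so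
`γ(s, t) ~ t^s / s`. As `t → ∞`, on `u ≥ t` one has
`|(s - 1) log (u/t)| ≤ |s - 1| (u - t)/t`, which squeezes `Γ(s, t)` between
`t^{s-1} e^{-t} / (1 ± |s - 1|/t)`, so `Γ(s, t) ~ t^{s-1} e^{-t}`.
For `a + c = 2b` the powers of `t` (and of `e^{-t}`) cancel in the ratio `G(a)G(c)/G(b)²` of
these asymptotic forms, leaving `b²/(ac)` for `γ` and `1` for `Γ`; with
`a, b, c = n/2, (n+1)/2, (n+2)/2` this gives `V_out → (n+1)²/(n(n+2)) - 1 = 1/(n(n+2))`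
and `V_in → 0`.
-/

open scoped Topology

theorem tendsto_mul_div_sq_of_tendsto_div {α : Type*} {l : Filter α}
    {f₁ f₂ f₃ g₁ g₂ g₃ : α → ℝ} {κ : ℝ} (hκ : κ ≠ 0)
    (h₁ : Tendsto (fun x => f₁ x / g₁ x) l (𝓝 1)) (h₂ : Tendsto (fun x => f₂ x / g₂ x) l (𝓝 1))
    (h₃ : Tendsto (fun x => f₃ x / g₃ x) l (𝓝 1))
    (hg : ∀ᶠ x in l, g₁ x * g₃ x / g₂ x ^ 2 = κ) :
    Tendsto (fun x => f₁ x * f₃ x / f₂ x ^ 2) l (𝓝 κ) := by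
  have hlim : Tendsto (fun x => f₁ x / g₁ x * (f₃ x / g₃ x) / (f₂ x / g₂ x) ^ 2 *
      (g₁ x * g₃ x / g₂ x ^ 2)) l (𝓝 κ) := by
    simpa using ((h₁.mul h₃).div (h₂.pow 2) (by norm_num)).mul
      (tendsto_const_nhds.congr' (hg.mono fun _ hx => hx.symm))
  refine hlim.congr' ?_
  filter_upwards [hg, h₂.eventually_ne one_ne_zero] with x hgx hfx
  obtain ⟨hg₁₃, hg₂⟩ := div_ne_zero_iff.mp (hgx ▸ hκ)
  obtain ⟨hg₁, hg₃⟩ := mul_ne_zero_iff.mp hg₁₃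
  have hf₂ : f₂ x ≠ 0 := (div_ne_zero_iff.mp hfx).1
  have hg₂ : g₂ x ≠ 0 := (pow_ne_zero_iff two_ne_zero).mp hg₂
  field_simp

theorem integrableOn_rpow_sub_one_mul_exp_neg {s : ℝ} (hs : 0 < s) {S : Set ℝ}
    (hS : S ⊆ Ioi 0) (hSm : MeasurableSet S) :
    IntegrableOn (fun u : ℝ => u ^ (s - 1) * exp (-u)) S :=
  ((GammaIntegral_convergent hs).mono_set hS).congr_fun (fun _ _ => mul_comm _ _) hSm

section IncompleteGamma

variable {s t : ℝ}

theorem integral_rpow_sub_one_Ioc (hs : 0 < s) (ht : 0 ≤ t) :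
    ∫ u in Ioc 0 t, u ^ (s - 1) = t ^ s / s := by
  rw [← intervalIntegral.integral_of_le ht, integral_rpow (Or.inl (by linarith)),
    sub_add_cancel, zero_rpow hs.ne', sub_zero]

theorem integrableOn_rpow_sub_one_Ioc (hs : 0 < s) (ht : 0 ≤ t) :
    IntegrableOn (fun u : ℝ => u ^ (s - 1)) (Ioc 0 t) :=
  (intervalIntegrable_iff_integrableOn_Ioc_of_le ht).mp
    (intervalIntegral.intervalIntegrable_rpow' (by linarith))

theorem lGamma_le (hs : 0 < s) (ht : 0 ≤ t) : lGamma s t ≤ t ^ s / s := by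
  rw [← integral_rpow_sub_one_Ioc hs ht]
  refine setIntegral_mono_on
    (integrableOn_rpow_sub_one_mul_exp_neg hs Ioc_subset_Ioi_self measurableSet_Ioc)
    (integrableOn_rpow_sub_one_Ioc hs ht) measurableSet_Ioc fun u hu => ?_
  exact mul_le_of_le_one_right (rpow_nonneg hu.1.le _) (exp_le_one_iff.mpr (by linarith [hu.1]))

theorem exp_neg_mul_le_lGamma (hs : 0 < s) (ht : 0 ≤ t) :
    exp (-t) * (t ^ s / s) ≤ lGamma s t := by
  rw [← integral_rpow_sub_one_Ioc hs ht, ← integral_const_mul]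
  refine setIntegral_mono_on ((integrableOn_rpow_sub_one_Ioc hs ht).const_mul _)
    (integrableOn_rpow_sub_one_mul_exp_neg hs Ioc_subset_Ioi_self measurableSet_Ioc)
    measurableSet_Ioc fun u hu => ?_
  rw [mul_comm]
  exact mul_le_mul_of_nonneg_left (exp_le_exp.mpr (neg_le_neg hu.2)) (rpow_nonneg hu.1.le _)

theorem tendsto_lGamma_div_rpow (hs : 0 < s) :
    Tendsto (fun t => lGamma s t / (t ^ s / s)) (𝓝[>] 0) (𝓝 1) := by
  have hexp : Tendsto (fun t : ℝ => exp (-t)) (𝓝[>] 0) (𝓝 1) :=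
    (continuous_neg.rexp.tendsto' 0 1 (by simp)).mono_left nhdsWithin_le_nhds
  refine tendsto_of_tendsto_of_tendsto_of_le_of_le' hexp tendsto_const_nhds ?_ ?_ <;>
    filter_upwards [self_mem_nhdsWithin] with t (ht : 0 < t)
  · exact (le_div_iff₀ (by positivity)).mpr (exp_neg_mul_le_lGamma hs ht.le)
  · exact (div_le_one (by positivity)).mpr (lGamma_le hs ht.le)

theorem tendsto_lGamma_mul_div_sq {a b c : ℝ} (ha : 0 < a) (hb : 0 < b) (hc : 0 < c)
    (habc : a + c = 2 * b) :
    Tendsto (fun t => lGamma a t * lGamma c t / lGamma b t ^ 2) (𝓝[>] 0)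
      (𝓝 (b ^ 2 / (a * c))) := by
  refine tendsto_mul_div_sq_of_tendsto_div (by positivity) (tendsto_lGamma_div_rpow ha)
    (tendsto_lGamma_div_rpow hb) (tendsto_lGamma_div_rpow hc) ?_
  filter_upwards [self_mem_nhdsWithin] with t (ht : 0 < t)
  have hpow : t ^ a * t ^ c = (t ^ b) ^ 2 := by
    rw [← rpow_add ht, habc, sq, ← rpow_add ht, two_mul]
  have : t ^ b ≠ 0 := (rpow_pos_of_pos ht b).ne'
  field_simp
  exact hpow

theorem abs_log_div_mul_le {u : ℝ} (ht : 0 < t) (htu : t ≤ u) (p : ℝ) :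
    |log (u / t) * p| ≤ |p| / t * (u - t) := by
  have hlog : log (u / t) ≤ (u - t) / t := by
    rw [sub_div, div_self ht.ne']
    exact log_le_sub_one_of_pos (div_pos (ht.trans_le htu) ht)
  rw [abs_mul, abs_of_nonneg (log_nonneg ((one_le_div ht).mpr htu))]
  calc log (u / t) * |p| ≤ (u - t) / t * |p| := by gcongr
    _ = |p| / t * (u - t) := by ring

theorem div_rpow_mem_Icc {u : ℝ} (ht : 0 < t) (htu : t ≤ u) (p : ℝ) :
    (u / t) ^ p ∈ Icc (exp (-(|p| / t) * (u - t))) (exp (|p| / t * (u - t))) := by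
  rw [rpow_def_of_pos (div_pos (ht.trans_le htu) ht), neg_mul]
  obtain ⟨hlo, hhi⟩ := abs_le.mp (abs_log_div_mul_le ht htu p)
  exact ⟨exp_le_exp.mpr hlo, exp_le_exp.mpr hhi⟩

theorem exp_mul_sub_mul_exp_neg (b u : ℝ) :
    exp (b * (u - t)) * exp (-u) = exp (-(b * t)) * exp ((b - 1) * u) := by
  rw [← exp_add, ← exp_add]
  ring_nf

theorem integrableOn_exp_mul_sub_mul_exp_neg {b : ℝ} (hb : b < 1) :
    IntegrableOn (fun u => exp (b * (u - t)) * exp (-u)) (Ioi t) := by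
  simp_rw [exp_mul_sub_mul_exp_neg]
  exact (integrableOn_exp_mul_Ioi (by linarith) t).const_mul _

theorem integral_exp_mul_sub_mul_exp_neg {b : ℝ} (hb : b < 1) :
    ∫ u in Ioi t, exp (b * (u - t)) * exp (-u) = exp (-t) / (1 - b) := by
  simp_rw [exp_mul_sub_mul_exp_neg]
  rw [integral_const_mul, integral_exp_mul_Ioi (by linarith), mul_div_assoc', mul_neg,
    ← exp_add, neg_div, ← div_neg, neg_sub]
  congr 2
  ring

theorem rpow_eq_rpow_mul_div_rpow {u : ℝ} (ht : 0 < t) (hu : 0 ≤ u) (p : ℝ) :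
    u ^ p = t ^ p * (u / t) ^ p := by
  rw [div_rpow hu ht.le, mul_div_cancel₀ _ (rpow_pos_of_pos ht p).ne']

theorem uGamma_le (hs : 0 < s) (ht : 0 < t) (hc : |s - 1| / t < 1) :
    uGamma s t ≤ t ^ (s - 1) * exp (-t) / (1 - |s - 1| / t) := by
  rw [mul_div_assoc, ← integral_exp_mul_sub_mul_exp_neg hc, ← integral_const_mul]
  refine setIntegral_mono_on
    (integrableOn_rpow_sub_one_mul_exp_neg hs (Ioi_subset_Ioi ht.le) measurableSet_Ioi)
    ((integrableOn_exp_mul_sub_mul_exp_neg hc).const_mul _) measurableSet_Ioi fun u hu => ?_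
  rw [rpow_eq_rpow_mul_div_rpow ht (ht.trans hu).le, mul_assoc]
  gcongr
  exact (div_rpow_mem_Icc ht hu.le _).2

theorem le_uGamma (hs : 0 < s) (ht : 0 < t) :
    t ^ (s - 1) * exp (-t) / (1 + |s - 1| / t) ≤ uGamma s t := by
  have hb : -(|s - 1| / t) < 1 := by linarith [div_nonneg (abs_nonneg (s - 1)) ht.le]
  rw [mul_div_assoc, ← sub_neg_eq_add, ← integral_exp_mul_sub_mul_exp_neg hb,
    ← integral_const_mul]
  refine setIntegral_mono_on ((integrableOn_exp_mul_sub_mul_exp_neg hb).const_mul _)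
    (integrableOn_rpow_sub_one_mul_exp_neg hs (Ioi_subset_Ioi ht.le) measurableSet_Ioi)
    measurableSet_Ioi fun u hu => ?_
  rw [rpow_eq_rpow_mul_div_rpow ht (ht.trans hu).le, mul_assoc]
  gcongr
  exact (div_rpow_mem_Icc ht hu.le _).1

theorem tendsto_uGamma_div_rpow_mul_exp (hs : 0 < s) :
    Tendsto (fun t => uGamma s t / (t ^ (s - 1) * exp (-t))) atTop (𝓝 1) := by
  have hc : Tendsto (fun t => |s - 1| / t) atTop (𝓝 0) :=
    tendsto_const_nhds.div_atTop tendsto_id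
  have hlo : Tendsto (fun t => 1 / (1 + |s - 1| / t)) atTop (𝓝 1) := by
    simpa using (hc.const_add 1).inv₀ (by norm_num)
  have hhi : Tendsto (fun t => 1 / (1 - |s - 1| / t)) atTop (𝓝 1) := by
    simpa using (hc.const_sub 1).inv₀ (by norm_num)
  refine tendsto_of_tendsto_of_tendsto_of_le_of_le' hlo hhi ?_ ?_ <;>
    filter_upwards [eventually_gt_atTop 0, hc.eventually_lt_const one_pos] with t ht htc
  · rw [le_div_iff₀ (by positivity), one_div_mul_eq_div]
    exact le_uGamma hs ht
  · rw [div_le_iff₀ (by positivity), one_div_mul_eq_div]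
    exact uGamma_le hs ht htc

theorem tendsto_uGamma_mul_div_sq {a b c : ℝ} (ha : 0 < a) (hb : 0 < b) (hc : 0 < c)
    (habc : a + c = 2 * b) :
    Tendsto (fun t => uGamma a t * uGamma c t / uGamma b t ^ 2) atTop (𝓝 1) := by
  refine tendsto_mul_div_sq_of_tendsto_div one_ne_zero (tendsto_uGamma_div_rpow_mul_exp ha)
    (tendsto_uGamma_div_rpow_mul_exp hb) (tendsto_uGamma_div_rpow_mul_exp hc) ?_
  filter_upwards [eventually_gt_atTop 0] with t ht
  have hpow : t ^ (a - 1) * t ^ (c - 1) = (t ^ (b - 1)) ^ 2 := by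
    rw [← rpow_add ht, sq, ← rpow_add ht]
    congr 1
    linarith
  have : t ^ (b - 1) ≠ 0 := (rpow_pos_of_pos ht _).ne'
  field_simp
  exact hpow

end IncompleteGamma

/-- `V_out(t) → 1/(n(n+2))` as `t → 0⁺` and `V_in(t) → 0` as `t → ∞`;
consequently, the variance `M²·V_out(t)` of an outer-truncated scaled chi distribution with
fixed mean `M` tends to `M²/(n(n+2))` as `a/σ → 0`, and the variance `M²·V_in(t)` of an
inner-truncated scaled chi distribution with fixed mean `M` tends to `0` as `a/σ → ∞`. -/
theorem tendsto_Vout_Vin (n : ℝ) (hn : 0 < n) :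
    Filter.Tendsto (fun t : ℝ => Vout n t) (nhdsWithin 0 (Set.Ioi 0))
        (nhds (1 / (n * (n + 2)))) ∧
      Filter.Tendsto (fun t : ℝ => Vin n t) Filter.atTop (nhds 0) ∧
      (∀ M : ℝ,
        Filter.Tendsto (fun t : ℝ => M ^ 2 * Vout n t) (nhdsWithin 0 (Set.Ioi 0))
          (nhds (M ^ 2 / (n * (n + 2))))) ∧
      (∀ M : ℝ,
        Filter.Tendsto (fun t : ℝ => M ^ 2 * Vin n t) Filter.atTop (nhds 0)) := by
  have ha : 0 < n / 2 := by positivity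
  have hb : 0 < (n + 1) / 2 := by positivity
  have hc : 0 < (n + 2) / 2 := by positivity
  have habc : n / 2 + (n + 2) / 2 = 2 * ((n + 1) / 2) := by ring
  have hout : Tendsto (fun t => Vout n t) (𝓝[>] 0) (𝓝 (1 / (n * (n + 2)))) := by
    have hκ : ((n + 1) / 2) ^ 2 / (n / 2 * ((n + 2) / 2)) - 1 = 1 / (n * (n + 2)) := by
      field_simp
      ring
    simpa only [Vout, hκ] using (tendsto_lGamma_mul_div_sq ha hb hc habc).sub_const 1
  have hin : Tendsto (fun t => Vin n t) atTop (𝓝 0) := by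
    simpa only [Vin, sub_self] using (tendsto_uGamma_mul_div_sq ha hb hc habc).sub_const 1
  refine ⟨hout, hin, fun M => ?_, fun M => ?_⟩
  · simpa only [mul_one_div] using hout.const_mul (M ^ 2)
  · simpa only [mul_zero] using hin.const_mul (M ^ 2)
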